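/- arXiv:1107.2865 — 8 statements merged into one kernel-verified Lean document; each statement's English description precedes it below -/
import Mathlib

section
/- The function f : ℝ → ℝ defined by f(x) = (x/(x−1))·(1 − 4π²/x²)^{3/2} − 1 is strictly increasing on the closed interval [7, 6π² + 2π·√(9π² − 2)]. -/
/-!
With `a = 4π²`, the derivative of `x / (x - 1) * (1 - a / x²) ^ (3/2)` is
`√(1 - a / x²) * (-(x² - 3ax + 2a)) / (x² (x - 1)²)`, so the function increases wherever the
quadratic `x² - 12π²x + 8π²` is negative. The right endpoint `6π² + 2π√(9π² - 2)` is the larger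
root of that quadratic and it is negative at `7`, hence (by convexity) on the whole open interval.
-/

open Real

section

variable {a x : ℝ}

theorem hasDerivAt_div_sub_one (hx : x ≠ 1) :
    HasDerivAt (fun y : ℝ => y / (y - 1)) (-1 / (x - 1) ^ 2) x := by
  have hx' : x - 1 ≠ 0 := sub_ne_zero.mpr hx
  refine ((hasDerivAt_id x).div ((hasDerivAt_id x).sub_const 1) hx').congr_deriv ?_
  simp only [id]
  ring

theorem hasDerivAt_one_sub_div_sq (a : ℝ) (hx : x ≠ 0) :
    HasDerivAt (fun y : ℝ => 1 - a / y ^ 2) (2 * a / x ^ 3) x := by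
  refine ((hasDerivAt_const x 1).sub ((hasDerivAt_const x a).div (hasDerivAt_pow 2 x)
    (pow_ne_zero 2 hx))).congr_deriv ?_
  field_simp
  ring

theorem hasDerivAt_div_sub_one_mul_rpow (hx0 : x ≠ 0) (hx1 : x ≠ 1) (hax : a < x ^ 2) :
    HasDerivAt (fun y : ℝ => y / (y - 1) * (1 - a / y ^ 2) ^ ((3 : ℝ) / 2))
      (√(1 - a / x ^ 2) * (-(x ^ 2 - 3 * a * x + 2 * a) / (x ^ 2 * (x - 1) ^ 2))) x := by
  have hw : 0 < 1 - a / x ^ 2 := by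
    rw [sub_pos, div_lt_one (by positivity)]
    exact hax
  refine ((hasDerivAt_div_sub_one hx1).mul
    ((hasDerivAt_one_sub_div_sq a hx0).rpow_const (p := (3 : ℝ) / 2) (Or.inl hw.ne'))).congr_deriv ?_
  have hx1' : x - 1 ≠ 0 := sub_ne_zero.mpr hx1
  rw [show (3 : ℝ) / 2 = 1 + 1 / 2 by norm_num, rpow_add hw, rpow_one, ← sqrt_eq_rpow,
    show (1 : ℝ) + 1 / 2 - 1 = 1 / 2 by norm_num, ← sqrt_eq_rpow]
  field_simp
  ring

theorem sq_sub_mul_add_neg_of_mem_Ioo {b c l u : ℝ} (hl : l ^ 2 - b * l + c ≤ 0)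
    (hu : u ^ 2 - b * u + c ≤ 0) (hx : x ∈ Set.Ioo l u) : x ^ 2 - b * x + c < 0 := by
  obtain ⟨hlx, hxu⟩ := hx
  -- a monic quadratic minus its chord through `l` and `u` is `(x - l) * (x - u)`
  have hchord : (u - l) * (x ^ 2 - b * x + c)
      = (u - x) * (l ^ 2 - b * l + c) + (x - l) * (u ^ 2 - b * u + c)
        - (u - l) * ((x - l) * (u - x)) := by ring
  have : (u - l) * (x ^ 2 - b * x + c) < 0 := by
    rw [hchord]
    nlinarith [mul_pos (sub_pos.2 hlx) (sub_pos.2 hxu), mul_pos (sub_pos.2 (hlx.trans hxu))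
      (mul_pos (sub_pos.2 hlx) (sub_pos.2 hxu))]
  exact neg_of_mul_neg_right this (sub_pos.2 (hlx.trans hxu)).le

theorem strictMonoOn_div_sub_one_mul_rpow {l u : ℝ} (hl : 1 < l) (hal : a < l ^ 2)
    (hql : l ^ 2 - 3 * a * l + 2 * a ≤ 0) (hqu : u ^ 2 - 3 * a * u + 2 * a ≤ 0) :
    StrictMonoOn (fun x : ℝ => x / (x - 1) * (1 - a / x ^ 2) ^ ((3 : ℝ) / 2)) (Set.Icc l u) := by
  have hderiv : ∀ x, l ≤ x → HasDerivAt (fun y : ℝ => y / (y - 1) * (1 - a / y ^ 2) ^ ((3 : ℝ) / 2))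
      (√(1 - a / x ^ 2) * (-(x ^ 2 - 3 * a * x + 2 * a) / (x ^ 2 * (x - 1) ^ 2))) x :=
    fun x hx => hasDerivAt_div_sub_one_mul_rpow (by linarith) (by linarith) (by nlinarith)
  refine strictMonoOn_of_deriv_pos (convex_Icc l u)
    (fun x hx => (hderiv x hx.1).continuousAt.continuousWithinAt) fun x hx => ?_
  rw [interior_Icc] at hx
  have hx1 : 1 < x := hl.trans hx.1
  have hw : 0 < 1 - a / x ^ 2 := by
    rw [sub_pos, div_lt_one (by positivity)]
    nlinarith [hx.1]
  rw [(hderiv x hx.1.le).deriv]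
  have hq := sq_sub_mul_add_neg_of_mem_Ioo hql hqu hx
  have hx1' : 0 < x - 1 := sub_pos.2 hx1
  exact mul_pos (sqrt_pos.2 hw) (div_pos (neg_pos.2 hq) (by positivity))

end

theorem sq_sub_mul_add_eq_zero_of_critical :
    (6 * π ^ 2 + 2 * π * √(9 * π ^ 2 - 2)) ^ 2
      - 3 * (4 * π ^ 2) * (6 * π ^ 2 + 2 * π * √(9 * π ^ 2 - 2)) + 2 * (4 * π ^ 2) = 0 := by
  have hs : √(9 * π ^ 2 - 2) ^ 2 = 9 * π ^ 2 - 2 := sq_sqrt (by nlinarith [pi_gt_three])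
  linear_combination (4 * π ^ 2) * hs

theorem f_strictMonoOn :
    StrictMonoOn (fun x : ℝ => (x / (x - 1)) * (1 - 4 * π ^ 2 / x ^ 2) ^ ((3 : ℝ) / 2) - 1)
      (Set.Icc 7 (6 * π ^ 2 + 2 * π * Real.sqrt (9 * π ^ 2 - 2))) := by
  have h7 : (7 : ℝ) ^ 2 - 3 * (4 * π ^ 2) * 7 + 2 * (4 * π ^ 2) ≤ 0 := by nlinarith [pi_gt_three]
  have hπ7 : 4 * π ^ 2 < 7 ^ 2 := by nlinarith [pi_pos, pi_lt_d2]
  exact (strictMonoOn_div_sub_one_mul_rpow (by norm_num) hπ7 h7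
    sq_sub_mul_add_eq_zero_of_critical.le).add_const (-1)
end

section
/- The function f : ℝ → ℝ defined by f(x) = (x/(x−1))·(1 − 4π²/x²)^{3/2} − 1 is strictly decreasing on the interval [6π² + 2π·√(9π² − 2), ∞). -/
/-!
Write `c = 4π²`. For `x > 1` with `x² > c`, the derivative of `x / (x - 1) * (1 - c / x²) ^ (3/2)` is
`-√(1 - c / x²) * (x² - 3 c x + 2 c) / (x² (x - 1)²)`, and the threshold `6π² + 2π √(9π² - 2)` is
the larger root of `x² - 3 c x + 2 c`, beyond which this quadratic is positive.
-/

open Real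

theorem one_sub_div_sq_pos {c x : ℝ} (hx : x ≠ 0) (hcx : c < x ^ 2) : 0 < 1 - c / x ^ 2 := by
  rw [sub_pos, div_lt_one (by positivity)]
  exact hcx

theorem hasDerivAt_div_sub_one_mul_one_sub_div_sq_rpow {c x : ℝ} (hx : 1 < x) (hcx : c < x ^ 2) :
    HasDerivAt (fun y : ℝ => y / (y - 1) * (1 - c / y ^ 2) ^ ((3 : ℝ) / 2))
      (-((1 - c / x ^ 2) ^ ((1 : ℝ) / 2) * (x ^ 2 - 3 * c * x + 2 * c) /
        (x ^ 2 * (x - 1) ^ 2))) x := by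
  have hx0 : x ≠ 0 := by positivity
  have hx1 : x - 1 ≠ 0 := sub_ne_zero.mpr hx.ne'
  have hw := one_sub_div_sq_pos hx0 hcx
  have hquot : HasDerivAt (fun y : ℝ => y / (y - 1)) ((1 * (x - 1) - x * 1) / (x - 1) ^ 2) x :=
    (hasDerivAt_id x).div ((hasDerivAt_id x).sub_const 1) hx1
  have hbase : HasDerivAt (fun y : ℝ => 1 - c / y ^ 2)
      (-((0 * x ^ 2 - c * (↑2 * x ^ (2 - 1))) / (x ^ 2) ^ 2)) x :=
    ((hasDerivAt_const x c).div (hasDerivAt_pow 2 x) (by positivity)).const_sub 1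
  refine (hquot.mul (hbase.rpow_const (p := (3 : ℝ) / 2) (Or.inr (by norm_num)))).congr_deriv ?_
  rw [show (3 : ℝ) / 2 = 1 + 1 / 2 by norm_num, rpow_add hw, rpow_one,
    show (1 : ℝ) + 1 / 2 - 1 = 1 / 2 by norm_num]
  field_simp
  ring

theorem quadratic_pos_of_larger_root_lt {c r x : ℝ} (hr : r ^ 2 - 3 * c * r + 2 * c = 0)
    (hr_large : 3 * c ≤ 2 * r) (hx : r < x) : 0 < x ^ 2 - 3 * c * x + 2 * c := by
  have hfactor : x ^ 2 - 3 * c * x + 2 * c = (x - r) * (x + r - 3 * c) := by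
    linear_combination hr
  rw [hfactor]
  exact mul_pos (by linarith) (by linarith)

theorem strictAntiOn_div_sub_one_mul_one_sub_div_sq_rpow {c r : ℝ}
    (hr : r ^ 2 - 3 * c * r + 2 * c = 0) (hr_large : 3 * c ≤ 2 * r) (hr_one : 1 < r) :
    StrictAntiOn (fun x : ℝ => x / (x - 1) * (1 - c / x ^ 2) ^ ((3 : ℝ) / 2)) (Set.Ici r) := by
  have hderiv : ∀ x, r ≤ x → HasDerivAt (fun y : ℝ => y / (y - 1) * (1 - c / y ^ 2) ^ ((3 : ℝ) / 2))
      (-((1 - c / x ^ 2) ^ ((1 : ℝ) / 2) * (x ^ 2 - 3 * c * x + 2 * c) /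
        (x ^ 2 * (x - 1) ^ 2))) x := fun x hrx =>
    hasDerivAt_div_sub_one_mul_one_sub_div_sq_rpow (by linarith) (by nlinarith)
  refine strictAntiOn_of_deriv_neg (convex_Ici r)
    (fun x hx => (hderiv x hx).continuousAt.continuousWithinAt) fun x hx => ?_
  rw [interior_Ici] at hx
  have hrx : r < x := hx
  have hx0 : 0 < x := by linarith
  have hx1 : 0 < x - 1 := by linarith
  have hw := one_sub_div_sq_pos hx0.ne' (by nlinarith : c < x ^ 2)
  have hq := quadratic_pos_of_larger_root_lt hr hr_large hrx
  rw [(hderiv x hrx.le).deriv, neg_lt_zero]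
  exact div_pos (mul_pos (rpow_pos_of_pos hw _) hq) (mul_pos (pow_pos hx0 2) (pow_pos hx1 2))

theorem f_strictAntiOn :
    StrictAntiOn (fun x : ℝ => (x / (x - 1)) * (1 - 4 * π ^ 2 / x ^ 2) ^ ((3 : ℝ) / 2) - 1)
      (Set.Ici (6 * π ^ 2 + 2 * π * Real.sqrt (9 * π ^ 2 - 2))) := by
  have hπ : 3 < π := pi_gt_three
  have hs : √(9 * π ^ 2 - 2) ^ 2 = 9 * π ^ 2 - 2 := sq_sqrt (by nlinarith)
  have hs0 : 0 ≤ √(9 * π ^ 2 - 2) := sqrt_nonneg _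
  have hanti := strictAntiOn_div_sub_one_mul_one_sub_div_sq_rpow (c := 4 * π ^ 2)
    (r := 6 * π ^ 2 + 2 * π * √(9 * π ^ 2 - 2)) (by linear_combination 4 * π ^ 2 * hs)
    (by nlinarith) (by nlinarith)
  exact fun x hx y hy hxy => sub_lt_sub_right (hanti hx hy hxy) 1
end

section
/- There exists a unique real number x₀ in the interval [7, ∞) satisfying (x₀/(x₀−1))·(1 − 4π²/x₀²)^{3/2} = 1, and this x₀ lies in the open interval (59, 59.1). Moreover, (x/(x−1))·(1 − 4π²/x²)^{3/2} > 1 for every real x > x₀. -/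
/-!
Squaring removes the power `3/2`: for `x > 1` and `c ≤ x²`, the quantity
`x / (x - 1) * (1 - c / x²) ^ (3/2)` exceeds, equals or falls below `1` exactly as the
polynomial `(x² - c)³ - x⁴ (x - 1)²` is positive, zero or negative. For `c = 4π²` this
polynomial is negative on `[7, 59]`, strictly increasing on `[(6c + 2) / 5, ∞) ⊇ [59, ∞)`,
and positive at `59.1`, so it has exactly one root beyond `7`, lying in `(59, 59.1)`.
-/

open Real Set

/-- The paper's `f` is `powRatio (4 * π ^ 2) - 1`. -/
noncomputable def powRatio (c x : ℝ) : ℝ := x / (x - 1) * (1 - c / x ^ 2) ^ ((3 : ℝ) / 2)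

def rootPoly (c x : ℝ) : ℝ := (x ^ 2 - c) ^ 3 - x ^ 4 * (x - 1) ^ 2

section Squaring

variable {c x : ℝ}

lemma powRatio_nonneg (hx : 1 < x) (hc : c ≤ x ^ 2) : 0 ≤ powRatio c x := by
  have : 0 ≤ 1 - c / x ^ 2 := sub_nonneg.2 (div_le_one_of_le₀ hc (by positivity))
  have : 0 < x - 1 := by linarith
  unfold powRatio
  positivity

lemma powRatio_sq (hx : 1 < x) (hc : c ≤ x ^ 2) :
    powRatio c x ^ 2 = (x ^ 2 - c) ^ 3 / (x ^ 4 * (x - 1) ^ 2) := by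
  have hx0 : x ≠ 0 := by positivity
  have hx1 : x - 1 ≠ 0 := by linarith
  have ha : 0 ≤ 1 - c / x ^ 2 := sub_nonneg.2 (div_le_one_of_le₀ hc (by positivity))
  have h3 : ((1 - c / x ^ 2) ^ ((3 : ℝ) / 2)) ^ 2 = (1 - c / x ^ 2) ^ 3 := by
    rw [← rpow_mul_natCast ha, ← rpow_natCast]
    norm_num
  rw [powRatio, mul_pow, h3]
  field_simp

lemma one_lt_powRatio_iff (hx : 1 < x) (hc : c ≤ x ^ 2) :
    1 < powRatio c x ↔ 0 < rootPoly c x := by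
  rw [← one_lt_sq_iff₀ (powRatio_nonneg hx hc), powRatio_sq hx hc, one_lt_div (by positivity),
    rootPoly, sub_pos]

lemma powRatio_eq_one_iff (hx : 1 < x) (hc : c ≤ x ^ 2) :
    powRatio c x = 1 ↔ rootPoly c x = 0 := by
  rw [← pow_eq_one_iff_of_nonneg (powRatio_nonneg hx hc) two_ne_zero, powRatio_sq hx hc,
    div_eq_one_iff_eq (by positivity), rootPoly, sub_eq_zero]

end Squaring

lemma continuous_rootPoly (c : ℝ) : Continuous (rootPoly c) := by
  unfold rootPoly
  fun_prop

lemma hasDerivAt_rootPoly (c x : ℝ) :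
    HasDerivAt (rootPoly c) (2 * x * (5 * x ^ 3 - (6 * c + 2) * x ^ 2 + 3 * c ^ 2)) x := by
  have := (((hasDerivAt_pow 2 x).sub_const c).fun_pow 3).sub
    ((hasDerivAt_pow 4 x).fun_mul (((hasDerivAt_id' x).sub_const 1).fun_pow 2))
  exact this.congr_deriv (by push_cast; ring)

section SignOfRootPoly

variable {c : ℝ}

lemma strictMonoOn_rootPoly (hc : 0 ≤ c) :
    StrictMonoOn (rootPoly c) (Ici ((6 * c + 2) / 5)) := by
  refine strictMonoOn_of_hasDerivWithinAt_pos (convex_Ici _) (continuous_rootPoly c).continuousOn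
    (fun x _ => (hasDerivAt_rootPoly c x).hasDerivWithinAt) fun x hx => ?_
  rw [interior_Ici, mem_Ioi] at hx
  have hx0 : 0 < x := by linarith
  have : 0 < x ^ 2 * (5 * x - (6 * c + 2)) := by
    have : 0 < 5 * x - (6 * c + 2) := by linarith
    positivity
  nlinarith [sq_nonneg c]

lemma rootPoly_neg_of_mem_Icc (hc₁ : 39.47 < c) (hc₂ : c < 39.5) {x : ℝ} (hx : x ∈ Icc 7 59) :
    rootPoly c x < 0 := by
  obtain ⟨h7, h59⟩ := hx
  -- `x² (2x - 3c - 1)` is largest at the ends of `[7, 59]`, where it is still below `-3c²`.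
  have hcubic : x ^ 2 * (2 * x - 3 * c - 1) + 3 * c ^ 2 < 0 := by
    nlinarith [mul_nonneg (mul_nonneg (sub_nonneg.2 h7) (sub_nonneg.2 h59)) (by linarith : 0 ≤ x)]
  have hexpand : rootPoly c x = x ^ 2 * (x ^ 2 * (2 * x - 3 * c - 1) + 3 * c ^ 2) - c ^ 3 := by
    unfold rootPoly
    ring
  rw [hexpand]
  nlinarith [pow_pos (by linarith : 0 < c) 3]

lemma rootPoly_591_div_10_pos (hc : c < 39.5) : 0 < rootPoly c (591 / 10) := by
  have h : ((591 / 10) ^ 2 - 39.5 : ℝ) ^ 3 < ((591 / 10) ^ 2 - c) ^ 3 :=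
    pow_lt_pow_left₀ (by linarith) (by norm_num) three_ne_zero
  unfold rootPoly
  norm_num at h ⊢
  linarith

lemma exists_root_rootPoly (hc₁ : 39.47 < c) (hc₂ : c < 39.5) :
    ∃ x₀ ∈ Ioo (59 : ℝ) (591 / 10), rootPoly c x₀ = 0 ∧
      (∀ y, 7 ≤ y → rootPoly c y = 0 → y = x₀) ∧ ∀ x > x₀, 0 < rootPoly c x := by
  have hmono : StrictMonoOn (rootPoly c) (Ici 59) :=
    (strictMonoOn_rootPoly (by linarith)).mono (Ici_subset_Ici.2 (by linarith))
  obtain ⟨x₀, ⟨h59, h591⟩, hroot⟩ := intermediate_value_Ioo (by norm_num)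
    (continuous_rootPoly c).continuousOn
    ⟨rootPoly_neg_of_mem_Icc hc₁ hc₂ ⟨by norm_num, le_rfl⟩, rootPoly_591_div_10_pos hc₂⟩
  refine ⟨x₀, ⟨h59, h591⟩, hroot, fun y hy hy0 => ?_, fun x hx => ?_⟩
  · have h59y : 59 < y := by
      by_contra! h
      exact (rootPoly_neg_of_mem_Icc hc₁ hc₂ ⟨hy, h⟩).ne hy0
    exact hmono.injOn h59y.le h59.le (hy0.trans hroot.symm)
  · exact hroot ▸ hmono h59.le (h59.le.trans hx.le) hx

end SignOfRootPoly

theorem f_unique_root :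
    ∃ x₀ : ℝ, x₀ ∈ Set.Ici (7 : ℝ) ∧
      (x₀ / (x₀ - 1)) * (1 - 4 * π ^ 2 / x₀ ^ 2) ^ ((3 : ℝ) / 2) = 1 ∧
      (∀ y : ℝ, y ∈ Set.Ici (7 : ℝ) →
        (y / (y - 1)) * (1 - 4 * π ^ 2 / y ^ 2) ^ ((3 : ℝ) / 2) = 1 → y = x₀) ∧
      59 < x₀ ∧ x₀ < 591 / 10 ∧
      (∀ x : ℝ, x > x₀ → (x / (x - 1)) * (1 - 4 * π ^ 2 / x ^ 2) ^ ((3 : ℝ) / 2) > 1) := by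
  have hc₁ : 39.47 < 4 * π ^ 2 := by nlinarith [pi_gt_d4]
  have hc₂ : 4 * π ^ 2 < 39.5 := by nlinarith [pi_lt_d4, pi_pos]
  have hdom : ∀ x : ℝ, 7 ≤ x → 1 < x ∧ 4 * π ^ 2 ≤ x ^ 2 :=
    fun x hx => ⟨by linarith, by nlinarith⟩
  obtain ⟨x₀, ⟨h59, h591⟩, hroot, huniq, hpos⟩ := exists_root_rootPoly hc₁ hc₂
  have h7 : 7 ≤ x₀ := by linarith
  refine ⟨x₀, h7, (powRatio_eq_one_iff (hdom x₀ h7).1 (hdom x₀ h7).2).2 hroot,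
    fun y hy hy1 => ?_, h59, h591, fun x hx => ?_⟩
  · exact huniq y hy ((powRatio_eq_one_iff (hdom y hy).1 (hdom y hy).2).1 hy1)
  · have hx7 : 7 ≤ x := by linarith
    exact (one_lt_powRatio_iff (hdom x hx7).1 (hdom x hx7).2).2 (hpos x hx)
end

section
/- For all integers n and m with 5 ≤ n ≤ 10 and |m| ≥ 6, and for each q among 16m², 16m² + 16m + 4, 16m² + 8m + 1, and 16m² − 8m + 1, one has n·(1 − 4π²/(n² + q))^{3/2} > n − 1 (as real numbers). (These are the length-squared corrections to the Dehn-filling slopes producing all n–chain links with the corresponding numbers of half–twists; the inequality shows their volumes exceed (n−1)·v₈.) -/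
/-! Each of the four quadratics is a square `(4m + e)²` with `|e| ≤ 2`, so `q ≥ 22² = 484`.
Since `1 - 4π²/ℓ²` increases with `ℓ²`, it suffices to check the inequality at `ℓ² = n² + 484`
with `4π²` replaced by the upper bound `4 · 3.1416²`; squaring removes the exponent `3/2`, and the
six cases `n = 5, …, 10` are then numerical. At `n = 10` the margin is only about `0.003`: the
cruder bound `π < 3.15` would not suffice. -/

open Real

lemma sub_one_lt_mul_rpow_three_halves {N x : ℝ} (hN : 0 ≤ N) (hx : 0 ≤ x)
    (h : (N - 1) ^ 2 < N ^ 2 * x ^ 3) :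
    N - 1 < N * x ^ ((3 : ℝ) / 2) := by
  have hsq : (x ^ ((3 : ℝ) / 2)) ^ 2 = x ^ 3 := by
    rw [← rpow_natCast, ← rpow_mul hx, ← rpow_natCast]
    norm_num
  exact (le_abs_self _).trans_lt
    (abs_lt_of_sq_lt_sq (by rwa [mul_pow, hsq]) (by positivity))

lemma sub_one_lt_mul_one_sub_div_rpow {N D c d : ℝ} (hN : 0 ≤ N) (hc : 4 * π ^ 2 ≤ c)
    (hcd : c ≤ d) (hdD : d ≤ D) (h : (N - 1) ^ 2 * d ^ 3 < N ^ 2 * (d - c) ^ 3) :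
    N - 1 < N * (1 - 4 * π ^ 2 / D) ^ ((3 : ℝ) / 2) := by
  have hd : 0 < d := (by positivity : 0 < 4 * π ^ 2).trans_le (hc.trans hcd)
  have hr : 0 ≤ (d - c) / d := div_nonneg (sub_nonneg.mpr hcd) hd.le
  have hrx : (d - c) / d ≤ 1 - 4 * π ^ 2 / D := by
    rw [sub_div, div_self hd.ne']
    exact sub_le_sub_left (div_le_div₀ ((by positivity : 0 ≤ 4 * π ^ 2).trans hc) hc hd hdD) 1
  apply sub_one_lt_mul_rpow_three_halves hN (hr.trans hrx)
  calc (N - 1) ^ 2 < N ^ 2 * ((d - c) / d) ^ 3 := by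
        rwa [div_pow, ← mul_div_assoc, lt_div_iff₀ (by positivity)]
    _ ≤ N ^ 2 * (1 - 4 * π ^ 2 / D) ^ 3 := by gcongr

lemma chain_slope_sq_ge {m q : ℤ} (hm : 6 ≤ |m|)
    (hq : q = 16 * m ^ 2 ∨ q = 16 * m ^ 2 + 16 * m + 4 ∨
      q = 16 * m ^ 2 + 8 * m + 1 ∨ q = 16 * m ^ 2 - 8 * m + 1) :
    484 ≤ q := by
  rcases le_abs.mp hm with hm | hm <;> rcases hq with rfl | rfl | rfl | rfl <;> nlinarith

lemma chain_numerical_check {n : ℤ} (hn : 5 ≤ n) (hn' : n ≤ 10) :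
    ((n : ℝ) - 1) ^ 2 * ((n : ℝ) ^ 2 + 484) ^ 3 <
      (n : ℝ) ^ 2 * ((n : ℝ) ^ 2 + 484 - 4 * 3.1416 ^ 2) ^ 3 := by
  interval_cases n <;> norm_num

theorem small_chain_link_twists (n m : ℤ) (hn : 5 ≤ n) (hn' : n ≤ 10) (hm : 6 ≤ |m|)
    (q : ℤ)
    (hq : q = 16 * m ^ 2 ∨ q = 16 * m ^ 2 + 16 * m + 4 ∨
      q = 16 * m ^ 2 + 8 * m + 1 ∨ q = 16 * m ^ 2 - 8 * m + 1) :
    (n : ℝ) * (1 - 4 * π ^ 2 / ((n : ℝ) ^ 2 + (q : ℝ))) ^ ((3 : ℝ) / 2) > (n : ℝ) - 1 := by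
  have hq484 : (484 : ℝ) ≤ q := by exact_mod_cast chain_slope_sq_ge hm hq
  exact sub_one_lt_mul_one_sub_div_rpow (by positivity) (by gcongr; exact pi_lt_d4.le)
    (by nlinarith) (by linarith) (chain_numerical_check hn hn')
end

section
/- Let x > 1 be a real number satisfying x²·(1 − ((x−1)/x)^{2/3}) < 4π², and set R(x) = (1/2)·√(π²/(1 − ((x−1)/x)^{2/3}) − x²/4). Then for all real numbers c and m with x² + 16(m + c)² > 4π², the equation (x/(x−1))·(1 − 4π²/(x² + 16(m+c)²))^{3/2} = 1 holds if and only if m = −c + R(x) or m = −c − R(x). (Specializing c = 0, −1/2 depending on parity recovers the zeros ±R(n), −1/2 ± R(n), −1/4 ± R(n), 1/4 ± R(n) of the volume-bound function f(n,m) in the four cases of Theorem 5.3.) -/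
/-!
Since `(x - 1) / x ∈ (0, 1)` and `1 - k / ℓ² ≥ 0`, the equation `x / (x - 1) * (1 - k / ℓ²) ^ (3/2) = 1`
can be solved for `1 - k / ℓ²` by taking `2/3`-powers, which pins `ℓ²` to `k / (1 - ((x - 1) / x) ^ (2/3))`.
With `ℓ² = x² + 16 (m + c)²` and `k = 4π²` this says exactly `(m + c)² = R²`.
-/

open Real

lemma sub_one_div_rpow_lt_one {x p : ℝ} (hx : 1 < x) (hp : 0 < p) : ((x - 1) / x) ^ p < 1 :=
  rpow_lt_one (div_pos (by linarith) (by linarith)).le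
    ((div_lt_one (by linarith)).mpr (by linarith)) hp

lemma div_sub_one_mul_rpow_eq_one_iff {x k ℓsq : ℝ} (hx : 1 < x) (hk : 0 ≤ k) (hkℓ : k < ℓsq) :
    x / (x - 1) * (1 - k / ℓsq) ^ ((3 : ℝ) / 2) = 1 ↔
      ℓsq = k / (1 - ((x - 1) / x) ^ ((2 : ℝ) / 3)) := by
  have hq : 0 < (x - 1) / x := div_pos (by linarith) (by linarith)
  have hu : 0 < 1 - ((x - 1) / x) ^ ((2 : ℝ) / 3) :=
    sub_pos.mpr (sub_one_div_rpow_lt_one hx (by norm_num))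
  have hℓ : 0 < ℓsq := hk.trans_lt hkℓ
  have hA : 0 ≤ 1 - k / ℓsq := sub_nonneg.mpr ((div_le_one hℓ).mpr hkℓ.le)
  calc _ ↔ (1 - k / ℓsq) ^ ((3 : ℝ) / 2) = (x - 1) / x := by
        rw [mul_eq_one_iff_inv_eq₀ (div_ne_zero (by linarith) (by linarith)), inv_div, eq_comm]
    _ ↔ 1 - k / ℓsq = ((x - 1) / x) ^ ((2 : ℝ) / 3) := by
        rw [show (3 : ℝ) / 2 = ((2 : ℝ) / 3)⁻¹ by norm_num]
        exact rpow_inv_eq hA hq.le (by norm_num)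
    _ ↔ _ := by
        rw [eq_div_iff hu.ne', sub_eq_iff_eq_add, ← sub_eq_iff_eq_add', eq_comm,
          div_eq_iff hℓ.ne', mul_comm, eq_comm]

lemma sq_add_eq_sq_iff {m c R : ℝ} : (m + c) ^ 2 = R ^ 2 ↔ m = -c + R ∨ m = -c - R := by
  rw [sq_eq_sq_iff_eq_or_eq_neg]
  constructor <;> rintro (h | h) <;> [left; right; left; right] <;> linarith

theorem zeros_of_volume_bound (x : ℝ) (hx : 1 < x)
    (hx2 : x ^ 2 * (1 - ((x - 1) / x) ^ ((2 : ℝ) / 3)) < 4 * π ^ 2)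
    (R : ℝ)
    (hR : R = (1 / 2) * Real.sqrt (π ^ 2 / (1 - ((x - 1) / x) ^ ((2 : ℝ) / 3)) - x ^ 2 / 4))
    (c m : ℝ) (hℓ : x ^ 2 + 16 * (m + c) ^ 2 > 4 * π ^ 2) :
    (x / (x - 1)) * (1 - 4 * π ^ 2 / (x ^ 2 + 16 * (m + c) ^ 2)) ^ ((3 : ℝ) / 2) = 1 ↔
      m = -c + R ∨ m = -c - R := by
  set u := 1 - ((x - 1) / x) ^ ((2 : ℝ) / 3)
  have hu : 0 < u := sub_pos.mpr (sub_one_div_rpow_lt_one hx (by norm_num))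
  have hR2 : R ^ 2 = (4 * π ^ 2 / u - x ^ 2) / 16 := by
    have hrad : 0 ≤ π ^ 2 / u - x ^ 2 / 4 := by
      rw [sub_nonneg, le_div_iff₀ hu]
      linarith
    rw [hR, mul_pow, sq_sqrt hrad]
    ring
  rw [div_sub_one_mul_rpow_eq_one_iff hx (by positivity) hℓ, ← sq_add_eq_sq_iff, hR2]
  constructor <;> intro h <;> linarith
end

section
/- For every natural number n ≥ 5 and every integer m such that n ≥ 60 or |m| ≥ 8, one has n·(1 − 4π²/(n² + 16m²))^{3/2} > n − 1 (as real numbers). (This is the case of Theorem 5.3 in which n is even and the number of half–twists r = 2m is even: the volume of the corresponding n–chain link complement, which is at least n·v₈·(1 − 4π²/(n² + 16m²))^{3/2}, exceeds (n−1)·v₈, the volume of the (n−1)–fold cyclic cover over a component of the Whitehead link.) -/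
/-! Bernoulli's inequality gives `n (1 - x)^{3/2} ≥ n - (3/2) n x` for `x = 4π²/(n² + 16m²)`,
so it suffices that `6π² n < n² + 16m²`. Since `π² < 10` this follows from `60 n ≤ n² + 16m²`,
which holds when `n ≥ 60` because then `60 n ≤ n²`, and when `|m| ≥ 8` because
`n² - 60 n + 1024 = (n - 30)² + 124`. -/

open Real

lemma one_sub_mul_le_rpow_one_sub {x p : ℝ} (hx : x ≤ 1) (hp : 1 ≤ p) :
    1 - p * x ≤ (1 - x) ^ p := by
  simpa [sub_eq_add_neg] using one_add_mul_self_le_rpow_one_add (by linarith : -1 ≤ -x) hp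

lemma sub_one_lt_mul_rpow_one_sub {a x p : ℝ} (ha : 0 ≤ a) (hx : x ≤ 1) (hp : 1 ≤ p)
    (h : p * a * x < 1) : a - 1 < a * (1 - x) ^ p :=
  calc a - 1 < a * (1 - p * x) := by linarith
    _ ≤ a * (1 - x) ^ p := mul_le_mul_of_nonneg_left (one_sub_mul_le_rpow_one_sub hx hp) ha

lemma pi_sq_lt_ten : π ^ 2 < 10 := by
  nlinarith [pi_lt_d2, pi_pos]

lemma sixty_mul_le_sq_add_sixteen_mul_sq {n m : ℝ} (hn : 0 ≤ n) (h : 60 ≤ n ∨ 8 ≤ |m|) :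
    60 * n ≤ n ^ 2 + 16 * m ^ 2 := by
  rcases h with hn60 | hm8
  · nlinarith [sq_nonneg m]
  · have hm : 64 ≤ m ^ 2 := by nlinarith [sq_abs m, abs_nonneg m]
    nlinarith [sq_nonneg (n - 30)]

theorem vol_withtwist_even_even (n : ℕ) (hn : 5 ≤ n) (m : ℤ) (h : 60 ≤ n ∨ 8 ≤ |m|) :
    (n : ℝ) * (1 - 4 * π ^ 2 / ((n : ℝ) ^ 2 + 16 * (m : ℝ) ^ 2)) ^ ((3 : ℝ) / 2)
      > (n : ℝ) - 1 := by
  have hn5 : (5 : ℝ) ≤ n := by exact_mod_cast hn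
  have hD : 60 * (n : ℝ) ≤ (n : ℝ) ^ 2 + 16 * (m : ℝ) ^ 2 :=
    sixty_mul_le_sq_add_sixteen_mul_sq (Nat.cast_nonneg n) (by exact_mod_cast h)
  have hD0 : 0 < (n : ℝ) ^ 2 + 16 * (m : ℝ) ^ 2 := by linarith
  have hpi := pi_sq_lt_ten
  refine sub_one_lt_mul_rpow_one_sub (Nat.cast_nonneg n) ?_ (by norm_num) ?_
  · rw [div_le_one hD0]
    linarith
  · rw [mul_div_assoc', div_lt_one hD0]
    nlinarith
end

section
/- For every natural number n ≥ 5 and every integer m such that n ≥ 60 or |m| ≥ 8, one has n·(1 − 4π²/(n² + 16m² + 8m + 1))^{3/2} > n − 1 (as real numbers). (This is the case of Theorem 5.3 in which n is odd and the number of half–twists r = 2m is even.) -/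
/-! Bernoulli's inequality `(1 - x)^{3/2} ≥ 1 - 3x/2` reduces the claim to `6π²n < n² + (4m + 1)²`.
Since `6π² < 60`, this holds when `n ≥ 60` because `n² ≥ 60n`, and when `|4m + 1| ≥ 31` because
`n² + 961 - 60n = (n - 30)² + 61 > 0`. -/

open Real

lemma sub_one_lt_mul_one_sub_rpow {N x p : ℝ} (hN : 1 ≤ N) (hp : 1 ≤ p) (h : p * N * x < 1) :
    N - 1 < N * (1 - x) ^ p := by
  have hx : x ≤ 1 := by
    by_contra! hx
    nlinarith [mul_le_mul hp hN zero_le_one (by linarith : (0 : ℝ) ≤ p)]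
  have bernoulli : 1 + p * -x ≤ (1 + -x) ^ p :=
    one_add_mul_self_le_rpow_one_add (by linarith) hp
  calc N - 1 < N * (1 - p * x) := by linarith
    _ ≤ N * (1 - x) ^ p := by
        gcongr
        simpa only [← sub_eq_add_neg, mul_neg] using bernoulli

lemma six_mul_pi_sq_lt_sixty : 6 * π ^ 2 < 60 := by
  nlinarith [pi_lt_d2, pi_pos]

lemma six_mul_pi_sq_mul_lt_sq_add_sq {N M : ℝ} (hN : 0 ≤ N) (h : 60 ≤ N ∨ 31 ≤ |M|) :
    6 * π ^ 2 * N < N ^ 2 + M ^ 2 := by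
  have hpi := six_mul_pi_sq_lt_sixty
  rcases h with hN60 | hM
  · nlinarith [sq_nonneg M]
  · nlinarith [sq_abs M, sq_nonneg (N - 30)]

lemma Int.thirty_one_le_abs_four_mul_add_one {m : ℤ} (hm : 8 ≤ |m|) : 31 ≤ |4 * m + 1| := by
  rcases abs_cases m <;> rcases abs_cases (4 * m + 1) <;> omega

theorem vol_withtwist_odd_even_general (n : ℕ) (m : ℤ) (h : 60 ≤ n ∨ 8 ≤ |m|) :
    (n : ℝ) * (1 - 4 * π ^ 2 / ((n : ℝ) ^ 2 + 16 * (m : ℝ) ^ 2 + 8 * (m : ℝ) + 1))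
        ^ ((3 : ℝ) / 2) > (n : ℝ) - 1 := by
  rcases n.eq_zero_or_pos with rfl | hn
  · norm_num
  set k : ℝ := ((4 * m + 1 : ℤ) : ℝ)
  have hD : (n : ℝ) ^ 2 + 16 * (m : ℝ) ^ 2 + 8 * (m : ℝ) + 1 = n ^ 2 + k ^ 2 := by
    simp only [k]; push_cast; ring
  have hkey : 6 * π ^ 2 * n < n ^ 2 + k ^ 2 := by
    refine six_mul_pi_sq_mul_lt_sq_add_sq n.cast_nonneg (h.imp (by exact_mod_cast ·) fun hm => ?_)
    simp only [k]
    exact_mod_cast Int.thirty_one_le_abs_four_mul_add_one hm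
  refine sub_one_lt_mul_one_sub_rpow (by exact_mod_cast hn) (by norm_num) ?_
  rw [hD]
  calc 3 / 2 * (n : ℝ) * (4 * π ^ 2 / (n ^ 2 + k ^ 2)) = 6 * π ^ 2 * n / (n ^ 2 + k ^ 2) := by ring
    _ < 1 := (div_lt_one (by positivity)).2 hkey

theorem vol_withtwist_odd_even (n : ℕ) (hn : 5 ≤ n) (m : ℤ) (h : 60 ≤ n ∨ 8 ≤ |m|) :
    (n : ℝ) * (1 - 4 * π ^ 2 / ((n : ℝ) ^ 2 + 16 * (m : ℝ) ^ 2 + 8 * (m : ℝ) + 1))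
        ^ ((3 : ℝ) / 2) > (n : ℝ) - 1 :=
  vol_withtwist_odd_even_general n m h
end

section
/- For every natural number n ≥ 5 and every integer m such that n ≥ 60 or |m| ≥ 8, one has n·(1 − 4π²/(n² + 16m² − 8m + 1))^{3/2} > n − 1 (as real numbers). (This is the case of Theorem 5.3 in which n is odd and the number of half–twists r = 2m + 1 is odd.) -/
/-! Bernoulli's inequality gives `(1 - 4π²/L)^{3/2} ≥ 1 - 6π²/L`, so it suffices that `6π² n < L`
for `L = n² + (4m - 1)²`. This is clear when `n ≥ 60 > 6π²`; when `|m| ≥ 8`, completing the square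
gives `L - 6π² n = (n - 3π²)² + (4m - 1)² - (3π²)²`, which is positive because
`|4m - 1| ≥ 31 > 3π²`. -/

open Real

noncomputable def slopeLengthSq (x y : ℝ) : ℝ := x ^ 2 + 16 * y ^ 2 - 8 * y + 1

lemma slopeLengthSq_eq (x y : ℝ) : slopeLengthSq x y = x ^ 2 + (4 * y - 1) ^ 2 := by
  unfold slopeLengthSq; ring

lemma thirty_one_le_abs_four_mul_sub_one {y : ℝ} (hy : 8 ≤ |y|) : 31 ≤ |4 * y - 1| := by
  have := abs_sub_abs_le_abs_sub (4 * y) 1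
  rw [abs_mul, abs_of_pos four_pos, abs_one] at this
  linarith

lemma four_pi_sq_lt_slopeLengthSq {x y : ℝ} (h : 60 ≤ x ∨ 8 ≤ |y|) :
    4 * π ^ 2 < slopeLengthSq x y := by
  rw [slopeLengthSq_eq]
  have := pi_sq_lt_ten
  rcases h with hx | hy
  · nlinarith [sq_nonneg (4 * y - 1)]
  · have h31 := thirty_one_le_abs_four_mul_sub_one hy
    nlinarith [sq_abs (4 * y - 1), sq_nonneg x]

lemma six_pi_sq_mul_lt_slopeLengthSq {x y : ℝ} (h : 60 ≤ x ∨ 8 ≤ |y|) :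
    6 * π ^ 2 * x < slopeLengthSq x y := by
  rw [slopeLengthSq_eq]
  have := pi_sq_lt_ten
  rcases h with hx | hy
  · nlinarith [sq_nonneg (4 * y - 1)]
  · have h31 := thirty_one_le_abs_four_mul_sub_one hy
    have h3pi : 3 * π ^ 2 < |4 * y - 1| := by linarith
    have : (3 * π ^ 2) ^ 2 < (4 * y - 1) ^ 2 := by
      rw [← sq_abs (4 * y - 1)]
      exact pow_lt_pow_left₀ h3pi (by positivity) two_ne_zero
    nlinarith [sq_nonneg (x - 3 * π ^ 2)]

lemma sub_one_lt_mul_one_sub_div_rpow_s18 {n a L p : ℝ} (hn : 0 ≤ n) (hp : 1 ≤ p) (hL : 0 < L)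
    (haL : a ≤ L) (hpan : p * a * n < L) : n - 1 < n * (1 - a / L) ^ p := by
  have bernoulli : 1 - p * (a / L) ≤ (1 - a / L) ^ p := by
    have h := one_add_mul_self_le_rpow_one_add
      (by linarith [(div_le_one hL).2 haL] : -1 ≤ -(a / L)) hp
    simpa only [mul_neg, ← sub_eq_add_neg] using h
  have hsmall : n * (p * (a / L)) < 1 := by
    rw [← mul_div_assoc, mul_div_assoc', div_lt_one hL]
    linarith
  calc n - 1 < n * (1 - p * (a / L)) := by linarith
    _ ≤ n * (1 - a / L) ^ p := mul_le_mul_of_nonneg_left bernoulli hn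

theorem vol_withtwist_odd_odd_general (n : ℕ) (m : ℤ) (h : 60 ≤ n ∨ 8 ≤ |m|) :
    (n : ℝ) * (1 - 4 * π ^ 2 / ((n : ℝ) ^ 2 + 16 * (m : ℝ) ^ 2 - 8 * (m : ℝ) + 1))
        ^ ((3 : ℝ) / 2) > (n : ℝ) - 1 := by
  have h' : 60 ≤ (n : ℝ) ∨ 8 ≤ |(m : ℝ)| := by exact_mod_cast h
  have hfour := four_pi_sq_lt_slopeLengthSq h'
  have hsix := six_pi_sq_mul_lt_slopeLengthSq h'
  unfold slopeLengthSq at hfour hsix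
  exact sub_one_lt_mul_one_sub_div_rpow_s18 n.cast_nonneg (by norm_num)
    (by nlinarith [pi_pos]) hfour.le (by linarith)

theorem vol_withtwist_odd_odd (n : ℕ) (hn : 5 ≤ n) (m : ℤ) (h : 60 ≤ n ∨ 8 ≤ |m|) :
    (n : ℝ) * (1 - 4 * π ^ 2 / ((n : ℝ) ^ 2 + 16 * (m : ℝ) ^ 2 - 8 * (m : ℝ) + 1))
        ^ ((3 : ℝ) / 2) > (n : ℝ) - 1 :=
  vol_withtwist_odd_odd_general n m h
end
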